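/- Let R be a ring and N a strongly Gorenstein projective R-module. Then N^⊥ = {X : Ext^1_R(N,X) = 0} is a thick subcategory of R-Mod: it is closed under direct summands, and for every short exact sequence 0 → A → B → C → 0 with two of A, B, C in N^⊥, the third is also in N^⊥. -/

import Mathlib

open CategoryTheory Opposite

noncomputable section

/-- The Ext group `Ext^n_R(M, N)` (as a `ℤ`-module). -/
def extMod (R : Type) [Ring R] (n : ℕ) (M N : ModuleCat.{0} R) : ModuleCat ℤ :=
  ((Ext ℤ (ModuleCat.{0} R) n).obj (op M)).obj N

variable (R : Type) [Ring R]

/-- `Ext^n_R(M,N) = 0`. -/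
def extVanish (n : ℕ) (M N : ModuleCat.{0} R) : Prop :=
  Subsingleton (extMod R n M N)

/-- `M^{⊥∞} = {X | Ext^i(M,X) = 0 for all i ≥ 1}`. -/
def perpInf (M : ModuleCat.{0} R) : Set (ModuleCat.{0} R) :=
  {X | ∀ i : ℕ, 1 ≤ i → extVanish R i M X}

/-- `^⊥𝒞 = {W | Ext^1(W,C) = 0 for all C ∈ 𝒞}`. -/
def leftPerp (𝒞 : Set (ModuleCat.{0} R)) : Set (ModuleCat.{0} R) :=
  {W | ∀ C ∈ 𝒞, extVanish R 1 W C}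

/-- `𝒞^⊥ = {X | Ext^1(C,X) = 0 for all C ∈ 𝒞}`. -/
def rightPerp (𝒞 : Set (ModuleCat.{0} R)) : Set (ModuleCat.{0} R) :=
  {X | ∀ C ∈ 𝒞, extVanish R 1 C X}

/-- Projective dimension at most `n`, via vanishing of `Ext^i` for `i ≥ n+1`. -/
def pdLE (n : ℕ) (M : ModuleCat.{0} R) : Prop :=
  ∀ (X : ModuleCat.{0} R) (i : ℕ), n + 1 ≤ i → extVanish R i M X

/-- `S` is a (first) syzygy of `M`: there is an exact sequence `0 → S → P → M → 0`
with `P` projective. -/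
def IsSyzygy (S M : ModuleCat.{0} R) : Prop :=
  ∃ (P : ModuleCat.{0} R) (_ : Projective P) (f : P ⟶ M) (ι : S ⟶ P),
    Function.Surjective f ∧ Function.Injective ι ∧ Function.Exact ι f

/-- `S` is an `n`-th syzygy of `M`. -/
def IsNthSyzygy : ℕ → ModuleCat.{0} R → ModuleCat.{0} R → Prop
  | 0, S, M => Nonempty (S ≅ M)
  | n + 1, S, M => ∃ S' : ModuleCat.{0} R, IsSyzygy R S' M ∧ IsNthSyzygy n S S'

/-- `G` is Gorenstein projective: a kernel in a totally acyclic complex of projectives. -/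
def IsGorensteinProjective (G : ModuleCat.{0} R) : Prop :=
  ∃ (P : ℤ → ModuleCat.{0} R) (d : ∀ i : ℤ, P i ⟶ P (i + 1)),
    (∀ i, Projective (P i)) ∧
    (∀ i, Function.Exact (d i) (d (i + 1))) ∧
    (∀ (Q : ModuleCat.{0} R), Projective Q → ∀ i : ℤ,
      Function.Exact (fun φ : P (i + 1 + 1) ⟶ Q => d (i + 1) ≫ φ)
        (fun φ : P (i + 1) ⟶ Q => d i ≫ φ)) ∧
    ∃ ι : G ⟶ P 0, Function.Injective ι ∧ Function.Exact ι (d 0)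

/-- Gorenstein projective dimension at most `n`: some `n`-th syzygy is Gorenstein
projective. -/
def gpdLE (n : ℕ) (M : ModuleCat.{0} R) : Prop :=
  ∃ S : ModuleCat.{0} R, IsNthSyzygy R n S M ∧ IsGorensteinProjective R S

/-- `N` is strongly Gorenstein projective. -/
def IsStronglyGorensteinProjective (N : ModuleCat.{0} R) : Prop :=
  ∃ (P : ModuleCat.{0} R) (_ : Projective P) (f : P ⟶ P),
    Function.Exact f f ∧
    (∀ (Q : ModuleCat.{0} R), Projective Q →
      Function.Exact (fun φ : P ⟶ Q => f ≫ φ) (fun φ : P ⟶ Q => f ≫ φ)) ∧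
    ∃ ι : N ⟶ P, Function.Injective ι ∧ Function.Exact ι f

/-- `S` is a direct summand of `N`. -/
def IsDirectSummand (S N : ModuleCat.{0} R) : Prop :=
  ∃ Y : ModuleCat.{0} R, Nonempty (ModuleCat.of R (↥S × ↥Y) ≅ N)

/-- `Add T`: direct summands of direct sums of copies of `T`. -/
def AddClass (T : ModuleCat.{0} R) : Set (ModuleCat.{0} R) :=
  {X | ∃ (ι : Type) (Y : ModuleCat.{0} R),
    Nonempty (ModuleCat.of R (↥X × ↥Y) ≅ ModuleCat.of R (ι →₀ ↥T))}

/-- `(𝒜, ℬ)` is a cotorsion pair. -/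
def IsCotorsionPair (𝒜 ℬ : Set (ModuleCat.{0} R)) : Prop :=
  𝒜 = leftPerp R ℬ ∧ ℬ = rightPerp R 𝒜

/-- A hereditary pair: `Ext^i(A,B) = 0` for all `i ≥ 1`, `A ∈ 𝒜`, `B ∈ ℬ`. -/
def IsHereditaryPair (𝒜 ℬ : Set (ModuleCat.{0} R)) : Prop :=
  ∀ i : ℕ, 1 ≤ i → ∀ A ∈ 𝒜, ∀ B ∈ ℬ, extVanish R i A B

/-- A complete pair: every module has special approximations. -/
def IsCompletePair (𝒜 ℬ : Set (ModuleCat.{0} R)) : Prop :=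
  ∀ M : ModuleCat.{0} R,
    (∃ (B : ModuleCat.{0} R) (_ : B ∈ ℬ) (L : ModuleCat.{0} R) (_ : L ∈ 𝒜)
      (f : M ⟶ B) (g : B ⟶ L),
      Function.Injective f ∧ Function.Surjective g ∧ Function.Exact f g) ∧
    (∃ (D : ModuleCat.{0} R) (_ : D ∈ ℬ) (C : ModuleCat.{0} R) (_ : C ∈ 𝒜)
      (f : D ⟶ C) (g : C ⟶ M),
      Function.Injective f ∧ Function.Surjective g ∧ Function.Exact f g)

/-- `T` is an `n`-tilting module. -/
def IsNTilting (n : ℕ) (T : ModuleCat.{0} R) : Prop :=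
  pdLE R n T ∧
  (∀ (ι : Type) (i : ℕ), 1 ≤ i → extVanish R i T (ModuleCat.of R (ι →₀ ↥T))) ∧
  ∃ (C : ℕ → ModuleCat.{0} R) (D : ∀ i : ℕ, C i ⟶ C (i + 1)),
    (∀ i, Function.Exact (D i) (D (i + 1))) ∧
    Subsingleton (C 0) ∧
    Nonempty (C 1 ≅ ModuleCat.of R R) ∧
    (∀ i : ℕ, 2 ≤ i → i ≤ n + 2 → C i ∈ AddClass R T) ∧
    (∀ i : ℕ, n + 3 ≤ i → Subsingleton (C i))

/-- `T` is a tilting module. -/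
def IsTilting (T : ModuleCat.{0} R) : Prop :=
  ∃ n : ℕ, IsNTilting R n T

end

/-!
Splicing `0 → N → P → N → 0` with itself gives the 2-periodic projective resolution
`⋯ → P → P → P → N` with all differentials `f`, so `Ext¹(N, X)` is the homology of the
complex `Hom(P, X)` with square-zero differential `f^* = (f ≫ ·)`. Since `P` is projective,
`Hom(P, -)` carries a short exact sequence `0 → A → B → C → 0` to a short exact sequence of such
2-periodic complexes, whose long exact homology sequence is a hexagon: if two of the homologies
vanish, so does the third. A retract of a complex with vanishing homology has vanishing homology,
which handles direct summands.
-/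

open Limits

section SquareZero

variable {A B C : Type*} [AddCommGroup A] [AddCommGroup B] [AddCommGroup C]
  {dA : A →+ A} {dB : B →+ B} {dC : C →+ C}

theorem Function.Exact.self_of_retract (hB : Function.Exact dB dB) {i : A →+ B} {r : B →+ A}
    (hri : ∀ a, r (i a) = a) (hi : ∀ a, i (dA a) = dB (i a)) (hr : ∀ b, r (dB b) = dA (r b)) :
    Function.Exact dA dA := by
  intro a
  constructor
  · intro ha
    obtain ⟨b, hb⟩ := (hB (i a)).1 (by rw [← hi, ha, map_zero])
    exact ⟨r b, by rw [← hr, hb, hri]⟩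
  · rintro ⟨a, rfl⟩
    rw [← hri (dA (dA a)), hi, hi, hB.apply_apply_eq_zero, map_zero]

variable {i : A →+ B} {p : B →+ C}

theorem Function.Exact.self_right_of_shortExact (hA : Function.Exact dA dA)
    (hB : Function.Exact dB dB) (hi : Function.Injective i) (hp : Function.Surjective p)
    (hip : Function.Exact i p) (hdi : ∀ a, i (dA a) = dB (i a))
    (hdp : ∀ b, p (dB b) = dC (p b)) : Function.Exact dC dC := by
  intro c
  constructor
  · intro hc
    obtain ⟨b, rfl⟩ := hp c
    obtain ⟨a, ha⟩ := (hip (dB b)).1 (by rw [hdp, hc])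
    obtain ⟨a', rfl⟩ := (hA a).1 (hi (by rw [hdi, ha, hB.apply_apply_eq_zero, map_zero]))
    obtain ⟨b', hb'⟩ := (hB (b - i a')).1 (by rw [map_sub, ← hdi, ha, sub_self])
    refine ⟨p b', ?_⟩
    rw [← hdp, hb', map_sub, hip.apply_apply_eq_zero, sub_zero]
  · rintro ⟨c', rfl⟩
    obtain ⟨b', rfl⟩ := hp c'
    rw [← hdp, ← hdp, hB.apply_apply_eq_zero, map_zero]

theorem Function.Exact.self_middle_of_shortExact (hA : Function.Exact dA dA)
    (hC : Function.Exact dC dC) (hB : ∀ b, dB (dB b) = 0) (hi : Function.Injective i)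
    (hp : Function.Surjective p) (hip : Function.Exact i p) (hdi : ∀ a, i (dA a) = dB (i a))
    (hdp : ∀ b, p (dB b) = dC (p b)) : Function.Exact dB dB := by
  intro b
  refine ⟨fun hb => ?_, by rintro ⟨b', rfl⟩; exact hB b'⟩
  obtain ⟨c, hc⟩ := (hC (p b)).1 (by rw [← hdp, hb, map_zero])
  obtain ⟨b', rfl⟩ := hp c
  obtain ⟨a, ha⟩ := (hip (b - dB b')).1 (by rw [map_sub, hdp, hc, sub_self])
  obtain ⟨a', rfl⟩ := (hA a).1 (hi (by rw [hdi, ha, map_sub, hb, hB, sub_zero, map_zero]))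
  refine ⟨b' + i a', ?_⟩
  rw [map_add, ← hdi, ha, add_sub_cancel]

theorem Function.Exact.self_left_of_shortExact (hB : Function.Exact dB dB)
    (hC : Function.Exact dC dC) (hi : Function.Injective i) (hp : Function.Surjective p)
    (hip : Function.Exact i p) (hdi : ∀ a, i (dA a) = dB (i a))
    (hdp : ∀ b, p (dB b) = dC (p b)) : Function.Exact dA dA := by
  intro a
  constructor
  · intro ha
    obtain ⟨b, hb⟩ := (hB (i a)).1 (by rw [← hdi, ha, map_zero])
    obtain ⟨c, hc⟩ := (hC (p b)).1 (by rw [← hdp, hb, hip.apply_apply_eq_zero])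
    obtain ⟨b', rfl⟩ := hp c
    obtain ⟨a', ha'⟩ := (hip (b - dB b')).1 (by rw [map_sub, hdp, hc, sub_self])
    refine ⟨a', hi ?_⟩
    rw [hdi, ha', map_sub, hB.apply_apply_eq_zero, sub_zero, hb]
  · rintro ⟨a', rfl⟩
    exact hi (by rw [hdi, hdi, hB.apply_apply_eq_zero, map_zero])

end SquareZero

section PeriodicComplex

variable {C : Type*} [Category C] [HasZeroMorphisms C] {P : C}

def periodicComplex (f : P ⟶ P) (hf : f ≫ f = 0) : ChainComplex C ℕ :=
  ChainComplex.of (fun _ => P) (fun _ => f) (fun _ => hf)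

@[simp]
lemma periodicComplex_d_succ (f : P ⟶ P) (hf : f ≫ f = 0) (n : ℕ) :
    (periodicComplex f hf).d (n + 1) n = f :=
  ChainComplex.of_d (fun _ => P) (fun _ => f) n

end PeriodicComplex

theorem Function.Exact.leftComp_of_retract {C : Type*} [Category C] [Preadditive C]
    {P X B : C} {f : P ⟶ P} (h : Retract X B)
    (hB : Function.Exact (Preadditive.leftComp B f) (Preadditive.leftComp B f)) :
    Function.Exact (Preadditive.leftComp X f) (Preadditive.leftComp X f) :=
  hB.self_of_retract (i := Preadditive.rightComp P h.i) (r := Preadditive.rightComp P h.r)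
    (fun g => by simp [Preadditive.rightComp]) (fun g => Category.assoc f g h.i)
    (fun g => Category.assoc f g h.r)

namespace ModuleCat

variable {R : Type*} [Ring R]

lemma comp_eq_zero_of_exact {M N P : ModuleCat R} {f : M ⟶ N} {g : N ⟶ P}
    (h : Function.Exact f g) : f ≫ g = 0 :=
  hom_ext h.linearMap_comp_eq_zero

def retractOfProdIso {X Y B : ModuleCat R} (e : ModuleCat.of R (X × Y) ≅ B) : Retract X B where
  i := ofHom (LinearMap.inl R X Y) ≫ e.hom
  r := e.inv ≫ ofHom (LinearMap.fst R X Y)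
  retract := by ext; simp

variable {A B C : ModuleCat R} {s : A ⟶ B} {t : B ⟶ C}

lemma exact_rightComp (hs : Function.Injective s) (hst : Function.Exact s t) (P : ModuleCat R) :
    Function.Exact (Preadditive.rightComp P s) (Preadditive.rightComp P t) := by
  let S := ShortComplex.mk s t (comp_eq_zero_of_exact hst)
  have hS : S.Exact := shortComplex_exact S hst
  have : Mono S.f := (mono_iff_injective s).2 hs
  intro g
  refine ⟨fun hg => ⟨hS.lift g hg, hS.lift_f g hg⟩, ?_⟩
  rintro ⟨u, rfl⟩
  simp [Preadditive.rightComp, comp_eq_zero_of_exact hst]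

lemma rightComp_shortExact (P : ModuleCat R) [Projective P] (hs : Function.Injective s)
    (ht : Function.Surjective t) (hst : Function.Exact s t) :
    Function.Injective (Preadditive.rightComp P s) ∧
      Function.Surjective (Preadditive.rightComp P t) ∧
      Function.Exact (Preadditive.rightComp P s) (Preadditive.rightComp P t) := by
  have : Mono s := (mono_iff_injective s).2 hs
  have : Epi t := (epi_iff_surjective t).2 ht
  exact ⟨fun _ _ h => (cancel_mono s).1 h,
    fun g => ⟨Projective.factorThru g t, Projective.factorThru_comp g t⟩,
    exact_rightComp hs hst P⟩

lemma exists_surjective_exact_of_exact_self {N P : ModuleCat R} {ι : N ⟶ P} {f : P ⟶ P}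
    (hff : Function.Exact f f) (hι : Function.Injective ι) (hιf : Function.Exact ι f) :
    ∃ π : P ⟶ N, Function.Surjective π ∧ Function.Exact f π := by
  obtain ⟨π, hπ⟩ := (exact_rightComp hι hιf P f).1 (comp_eq_zero_of_exact hff)
  have hπ' : ∀ x, ι (π x) = f x := fun x => congrArg (fun g : P ⟶ P => g x) hπ
  refine ⟨π, fun y => ?_, fun x => ?_⟩
  · obtain ⟨x, hx⟩ := (hff (ι y)).1 (hιf.apply_apply_eq_zero y)
    exact ⟨x, hι (by rw [hπ', hx])⟩
  · rw [← hff x, ← hπ', map_eq_zero_iff ι.hom hι]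

noncomputable def periodicResolution {N P : ModuleCat R} [Projective P] {f : P ⟶ P}
    (hff : Function.Exact f f) {π : P ⟶ N} (hπ : Function.Surjective π)
    (hfπ : Function.Exact f π) : ProjectiveResolution N where
  complex := periodicComplex f (comp_eq_zero_of_exact hff)
  projective _ := ‹Projective P›
  π := (ChainComplex.toSingle₀Equiv _ _).symm
    ⟨π, by rw [periodicComplex_d_succ]; exact comp_eq_zero_of_exact hfπ⟩
  quasiIso := ⟨fun n => by
    cases n with
    | zero =>
      rw [ChainComplex.quasiIsoAt₀_iff, ShortComplex.quasiIso_iff_of_zeros' _ rfl rfl rfl]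
      exact ⟨shortComplex_exact _ hfπ, (epi_iff_surjective _).2 hπ⟩
    | succ n =>
      rw [quasiIsoAt_iff_exactAt' _ _ (ChainComplex.exactAt_succ_single_obj _ _),
        HomologicalComplex.exactAt_iff' _ (n + 2) (n + 1) n (by simp) (by simp)]
      refine shortComplex_exact _ ?_
      simp only [HomologicalComplex.shortComplexFunctor'_obj_f,
        HomologicalComplex.shortComplexFunctor'_obj_g, periodicComplex_d_succ]
      exact hff⟩

end ModuleCat

theorem extVanish_one_iff_exact_leftComp {R : Type} [Ring R] {N P : ModuleCat.{0} R}
    [Projective P] {f : P ⟶ P} (hff : Function.Exact f f) {π : P ⟶ N}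
    (hπ : Function.Surjective π) (hfπ : Function.Exact f π) (X : ModuleCat.{0} R) :
    extVanish R 1 N X ↔ Function.Exact (Preadditive.leftComp X f) (Preadditive.leftComp X f) := by
  rw [extVanish, extMod, ← ModuleCat.isZero_iff_subsingleton,
    ((ModuleCat.periodicResolution hff hπ hfπ).isoExt 1 X).isZero_iff,
    ← HomologicalComplex.exactAt_iff_isZero_homology,
    HomologicalComplex.exactAt_iff' _ 0 1 2 (by simp) (by simp),
    ShortComplex.ShortExact.moduleCat_exact_iff_function_exact]
  rfl

/-- for `N` strongly Gorenstein projective, `N^⊥` is thick. -/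
theorem stmt6 (R : Type) [Ring R] (N : ModuleCat.{0} R)
    (hN : IsStronglyGorensteinProjective R N) :
    (∀ B : ModuleCat.{0} R, extVanish R 1 N B →
      ∀ X Y : ModuleCat.{0} R, Nonempty (ModuleCat.of R (↥X × ↥Y) ≅ B) →
        extVanish R 1 N X) ∧
    (∀ (A B C : ModuleCat.{0} R) (f : A ⟶ B) (g : B ⟶ C),
      Function.Injective f → Function.Surjective g → Function.Exact f g →
        ((extVanish R 1 N A → extVanish R 1 N B → extVanish R 1 N C) ∧
         (extVanish R 1 N A → extVanish R 1 N C → extVanish R 1 N B) ∧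
         (extVanish R 1 N B → extVanish R 1 N C → extVanish R 1 N A))) := by
  obtain ⟨P, _, f, hff, -, ι, hι, hιf⟩ := hN
  obtain ⟨π, hπ, hfπ⟩ := ModuleCat.exists_surjective_exact_of_exact_self hff hι hιf
  simp only [extVanish_one_iff_exact_leftComp hff hπ hfπ]
  refine ⟨fun B hB X Y ⟨e⟩ => hB.leftComp_of_retract (ModuleCat.retractOfProdIso e),
    fun A B C s t hs ht hst => ?_⟩
  obtain ⟨hs', ht', hst'⟩ := ModuleCat.rightComp_shortExact P hs ht hst
  have hds (g : P ⟶ A) := Category.assoc f g s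
  have hdt (g : P ⟶ B) := Category.assoc f g t
  have hff' (g : P ⟶ B) : f ≫ f ≫ g = 0 := by
    rw [← Category.assoc, ModuleCat.comp_eq_zero_of_exact hff, zero_comp]
  exact ⟨fun hA hB => hA.self_right_of_shortExact hB hs' ht' hst' hds hdt,
    fun hA hC => hA.self_middle_of_shortExact hC hff' hs' ht' hst' hds hdt,
    fun hB hC => hB.self_left_of_shortExact hC hs' ht' hst' hds hdt⟩
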